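/- arXiv:math/0602021 — 2 statements merged into one kernel-verified Lean document; each statement's English description precedes it below -/
import Mathlib

section
/- Let φ: (Mᵐ,g) → (N,h), m > 2, be a smooth map whose biharmonic stress-energy tensor S₂ vanishes. If at every point p ∈ M the rank of dφ_p is at most m−1, then φ is harmonic. -/
open scoped RealInnerProductSpace
noncomputable section

/-- A fixed orthonormal frame of the (model) tangent space of the `m`-dimensional
Riemannian manifold `M`. -/
def onb (m : ℕ) : OrthonormalBasis (Fin m) ℝ (EuclideanSpace ℝ (Fin m)) :=
  EuclideanSpace.basisFun (Fin m) ℝ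

/-- The biharmonic stress-energy tensor
`S₂(X,Y) = ½|τ(φ)|² ⟨X,Y⟩ + ⟨dφ,∇τ(φ)⟩ ⟨X,Y⟩ − ⟨dφ(X),∇_Y τ(φ)⟩ − ⟨dφ(Y),∇_X τ(φ)⟩`,
expressed pointwise in terms of the differential `dphi` of `φ`, the tension field `tau`
and its covariant derivative `Dtau` (the trace `⟨dφ,∇τ(φ)⟩` being computed in an
orthonormal frame). -/
def S2 {m : ℕ} {F : Type*} [NormedAddCommGroup F] [InnerProductSpace ℝ F]
    (dphi : EuclideanSpace ℝ (Fin m) →ₗ[ℝ] F) (tau : F)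
    (Dtau : EuclideanSpace ℝ (Fin m) →ₗ[ℝ] F)
    (X Y : EuclideanSpace ℝ (Fin m)) : ℝ :=
  (1 / 2 : ℝ) * ‖tau‖ ^ 2 * ⟪X, Y⟫
    + (∑ i, ⟪dphi (onb m i), Dtau (onb m i)⟫) * ⟪X, Y⟫
    - ⟪dphi X, Dtau Y⟫ - ⟪dphi Y, Dtau X⟫

theorem LinearMap.exists_ne_zero_map_eq_zero_of_rank_lt_finrank {K V W : Type*} [DivisionRing K]
    [AddCommGroup V] [AddCommGroup W] [Module K V] [Module K W] [FiniteDimensional K V]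
    (f : V →ₗ[K] W) (h : f.rank < Module.finrank K V) : ∃ x, x ≠ 0 ∧ f x = 0 := by
  by_contra! hker
  have hinj : Function.Injective f :=
    (injective_iff_map_eq_zero f).mpr fun x hx => by_contra fun hx0 => hker x hx0 hx
  rw [LinearMap.rank, ← Module.finrank_eq_rank, LinearMap.finrank_range_of_inj hinj] at h
  exact h.false

section S2

variable {m : ℕ} {F : Type*} [NormedAddCommGroup F] [InnerProductSpace ℝ F]
  (dphi : EuclideanSpace ℝ (Fin m) →ₗ[ℝ] F) (tau : F) (Dtau : EuclideanSpace ℝ (Fin m) →ₗ[ℝ] F)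

theorem S2_self_of_map_eq_zero {X : EuclideanSpace ℝ (Fin m)} (hX : dphi X = 0) :
    S2 dphi tau Dtau X X =
      ((1 / 2 : ℝ) * ‖tau‖ ^ 2 + ∑ i, ⟪dphi (onb m i), Dtau (onb m i)⟫) * ‖X‖ ^ 2 := by
  simp only [S2, hX, inner_zero_left, real_inner_self_eq_norm_sq]
  ring

theorem sum_S2_onb :
    ∑ i, S2 dphi tau Dtau (onb m i) (onb m i) =
      m * ((1 / 2 : ℝ) * ‖tau‖ ^ 2 + ∑ i, ⟪dphi (onb m i), Dtau (onb m i)⟫)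
        - 2 * ∑ i, ⟪dphi (onb m i), Dtau (onb m i)⟫ := by
  simp only [S2, real_inner_self_eq_norm_sq, (onb m).orthonormal.1, Finset.sum_sub_distrib,
    Finset.sum_add_distrib, Finset.sum_const, Finset.card_univ, Fintype.card_fin, nsmul_eq_mul]
  ring

/-- If `S₂` vanishes and `dφ` has a nonzero kernel vector `X`, then `S₂(X,X) = 0` kills the
combination `½|τ|² + ⟨dφ, ∇τ⟩`, and the trace of `S₂` then kills `⟨dφ, ∇τ⟩` itself. -/
theorem eq_zero_of_S2_eq_zero_of_map_eq_zero (hS2 : ∀ X Y, S2 dphi tau Dtau X Y = 0)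
    {X : EuclideanSpace ℝ (Fin m)} (hX0 : X ≠ 0) (hX : dphi X = 0) : tau = 0 := by
  set T := ∑ i, ⟪dphi (onb m i), Dtau (onb m i)⟫
  have hcomb : (1 / 2 : ℝ) * ‖tau‖ ^ 2 + T = 0 := by
    have h := S2_self_of_map_eq_zero dphi tau Dtau hX
    rw [hS2] at h
    exact (mul_eq_zero.mp h.symm).resolve_right (by positivity)
  have htrace := sum_S2_onb dphi tau Dtau
  rw [hcomb, Finset.sum_eq_zero fun i _ => hS2 _ _] at htrace
  have hT : T = 0 := by linarith
  have : ‖tau‖ ^ 2 = 0 := by linarith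
  simpa using this

end S2

/-- A map `φ : (Mᵐ,g) → (N,h)`, `m > 2`, with `S₂ = 0` and
`rank φ ≤ m − 1` at every point, is harmonic. -/
theorem rank_le_S2_zero_harmonic
    (m : ℕ) (hm : 2 < m)
    (M : Type*) (F : Type*) [NormedAddCommGroup F] [InnerProductSpace ℝ F]
    (dphi : M → EuclideanSpace ℝ (Fin m) →ₗ[ℝ] F)
    (tau : M → F)
    (Dtau : M → EuclideanSpace ℝ (Fin m) →ₗ[ℝ] F)
    (hrank : ∀ p, LinearMap.rank (dphi p) ≤ ((m - 1 : ℕ) : Cardinal))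
    (hS2 : ∀ p X Y, S2 (dphi p) (tau p) (Dtau p) X Y = 0) :
    ∀ p, tau p = 0 := by
  intro p
  have hlt : LinearMap.rank (dphi p) < Module.finrank ℝ (EuclideanSpace ℝ (Fin m)) := by
    rw [finrank_euclideanSpace_fin]
    exact (hrank p).trans_lt (by exact_mod_cast Nat.sub_lt (by omega) one_pos)
  obtain ⟨X, hX0, hX⟩ := (dphi p).exists_ne_zero_map_eq_zero_of_rank_lt_finrank hlt
  exact eq_zero_of_S2_eq_zero_of_map_eq_zero _ _ _ (hS2 p) hX0 hX

end
end

section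
/- Let φ: (M⁴,g) → (N⁴,h) be a smooth map between 4-manifolds with M compact, S₂ = 0, and rank dφ = 4 at every point. Then φ is harmonic. (Since dφ_p is an isomorphism, there is a unique vector field Z with dφ(Z) = τ(φ); plugging X = Y = Z into S₂ = 0 gives ½|τ(φ)|²|Z|² + Z(|τ(φ)|²) = 0, and evaluating at a maximum point of |τ(φ)|² yields τ(φ) = 0.) -/
/-!
Summing `S₂(eᵢ, eᵢ) = 0` over an orthonormal frame gives `m A = 2 T`, where
`T = ⟨dφ, ∇τ(φ)⟩` and `A = ½|τ(φ)|² + T`. At a maximum point of `|τ(φ)|²` the field `∇τ(φ)` is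
orthogonal to `τ(φ)`, so for the vector `Z` with `dφ(Z) = τ(φ)` one gets `S₂(Z, Z) = A |Z|²`.
Hence either `Z = 0`, or `A = 0`, then `T = 0` and `|τ(φ)|² = 0`; in both cases `τ(φ)` vanishes
at the maximum point, hence everywhere.
-/

open scoped RealInnerProductSpace
noncomputable section

section S2

variable {m : ℕ} {F : Type*} [NormedAddCommGroup F] [InnerProductSpace ℝ F]
  (dphi : EuclideanSpace ℝ (Fin m) →ₗ[ℝ] F) (tau : F) (Dtau : EuclideanSpace ℝ (Fin m) →ₗ[ℝ] F)

theorem sum_S2_onb_self :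
    ∑ i, S2 dphi tau Dtau (onb m i) (onb m i)
      = m * (1 / 2 * ‖tau‖ ^ 2 + ∑ i, ⟪dphi (onb m i), Dtau (onb m i)⟫)
        - 2 * ∑ i, ⟪dphi (onb m i), Dtau (onb m i)⟫ := by
  have hone : ∀ i, ⟪onb m i, onb m i⟫ = 1 := fun i =>
    inner_self_eq_one_of_norm_eq_one ((onb m).orthonormal.1 i)
  simp only [S2, hone, mul_one, Finset.sum_sub_distrib, Finset.sum_const, Finset.card_univ,
    Fintype.card_fin, nsmul_eq_mul]
  ring

theorem S2_self_of_apply_eq {Z : EuclideanSpace ℝ (Fin m)} (hZ : dphi Z = tau)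
    (horth : ⟪Dtau Z, tau⟫ = 0) :
    S2 dphi tau Dtau Z Z
      = (1 / 2 * ‖tau‖ ^ 2 + ∑ i, ⟪dphi (onb m i), Dtau (onb m i)⟫) * ‖Z‖ ^ 2 := by
  rw [S2, hZ, real_inner_comm (Dtau Z) tau, horth, real_inner_self_eq_norm_sq]
  ring

theorem eq_zero_of_S2_self_eq_zero (hS2 : ∀ X, S2 dphi tau Dtau X X = 0)
    (hrange : tau ∈ LinearMap.range dphi) (horth : ∀ X, ⟪Dtau X, tau⟫ = 0) : tau = 0 := by
  obtain ⟨Z, hZ⟩ := hrange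
  set T := ∑ i, ⟪dphi (onb m i), Dtau (onb m i)⟫
  have htrace : m * (1 / 2 * ‖tau‖ ^ 2 + T) - 2 * T = 0 := by
    rw [← sum_S2_onb_self]
    exact Finset.sum_eq_zero fun i _ => hS2 _
  have hZZ : (1 / 2 * ‖tau‖ ^ 2 + T) * ‖Z‖ ^ 2 = 0 := by
    rw [← S2_self_of_apply_eq dphi tau Dtau hZ (horth Z)]
    exact hS2 Z
  rcases mul_eq_zero.mp hZZ with hA | hZ0
  · have hT : T = 0 := by
      rw [hA, mul_zero, zero_sub, neg_eq_zero, mul_eq_zero] at htrace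
      exact htrace.resolve_left two_ne_zero
    rw [hT] at hA
    simpa using hA
  · rw [← hZ, norm_eq_zero.mp (pow_eq_zero_iff two_ne_zero |>.mp hZ0), map_zero]

end S2

/-- A map `φ : (M⁴,g) → (N⁴,h)` between 4-manifolds, `M` compact, with
`S₂ = 0` and `rank dφ = 4` (i.e. `dφ_p` invertible) at every point, is harmonic.
Here `dnorm p X = X(|τ(φ)|²)(p) = 2⟨∇_X τ(φ), τ(φ)⟩` is the differential of `|τ(φ)|²`,
which vanishes at a maximum point of `|τ(φ)|²` (attained by compactness). -/
theorem dim_four_full_rank_S2_zero_harmonic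
    (M : Type*) [TopologicalSpace M] [CompactSpace M] [Nonempty M]
    (dphi : M → EuclideanSpace ℝ (Fin 4) →ₗ[ℝ] EuclideanSpace ℝ (Fin 4))
    (tau : M → EuclideanSpace ℝ (Fin 4))
    (Dtau : M → EuclideanSpace ℝ (Fin 4) →ₗ[ℝ] EuclideanSpace ℝ (Fin 4))
    (dnorm : M → EuclideanSpace ℝ (Fin 4) → ℝ)
    (hrank : ∀ p, Function.Bijective (dphi p))
    (hS2 : ∀ p X Y, S2 (dphi p) (tau p) (Dtau p) X Y = 0)
    (hcont : Continuous fun p => ‖tau p‖)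
    (hdnorm : ∀ p X, dnorm p X = 2 * ⟪Dtau p X, tau p⟫)
    (hcrit : ∀ p₀, (∀ p, ‖tau p‖ ≤ ‖tau p₀‖) → ∀ X, dnorm p₀ X = 0) :
    ∀ p, tau p = 0 := by
  obtain ⟨p₀, hmax⟩ := hcont.exists_forall_ge (by simp)
  have horth : ∀ X, ⟪Dtau p₀ X, tau p₀⟫ = 0 := fun X => by
    simpa [hdnorm] using hcrit p₀ hmax X
  have htau₀ : tau p₀ = 0 :=
    eq_zero_of_S2_self_eq_zero (dphi p₀) (tau p₀) (Dtau p₀) (fun X => hS2 p₀ X X)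
      ((hrank p₀).2 (tau p₀)) horth
  intro p
  simpa [htau₀] using hmax p

end
end
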